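/- arXiv:1109.1902 — 3 statements merged into one kernel-verified Lean document; each statement's English description precedes it below -/
import Mathlib

section
/- Let n ≥ 2 and let (q_1,…,q_n) be a tuple of symmetric bilinear maps ℝ^n × ℝ^n → ℝ^n lying in Ker L^Ψ_I ∩ W, where I is the identity matrix. Then for all i,j = 1,…,n one has ⟨e_i, q_i(e_j,e_j)⟩ + ⟨e_j, q_j(e_i,e_i)⟩ = 0, and for all i,j,k = 1,…,n with i ≠ k one has ⟨e_k, q_i(e_j,e_j)⟩ = 0. -/
open scoped RealInnerProductSpace

noncomputable section

/-- `ℝ^n` with the Euclidean inner product and norm. -/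
abbrev E (n : ℕ) : Type := EuclideanSpace ℝ (Fin n)

/-- The symmetric bilinear map `Q_v(ξ,η) = ⟨ξ,η⟩·v − ⟨ξ,v⟩·η − ⟨η,v⟩·ξ`. -/
def Qv {n : ℕ} (v ξ η : E n) : E n := ⟪ξ, η⟫ • v - ⟪ξ, v⟫ • η - ⟪η, v⟫ • ξ

/-- The bracket `[Q,Q']` of two (symmetric bilinear) maps. -/
def brk {n : ℕ} (Q Q' : E n → E n → E n) (ξ η θ : E n) : E n :=
  (Q ξ (Q' η θ) + Q η (Q' θ ξ) + Q θ (Q' ξ η))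
    - (Q' ξ (Q η θ) + Q' η (Q θ ξ) + Q' θ (Q ξ η))

/-- A map `ℝ^n × ℝ^n → ℝ^n` is a symmetric bilinear map. -/
def IsSymmBilin {n : ℕ} (q : E n → E n → E n) : Prop :=
  (∀ ξ η, q ξ η = q η ξ) ∧ ∀ ξ, IsLinearMap ℝ (q ξ)

/-- The standard basis vectors `e_1, …, e_n` of `ℝ^n`. -/
def stdE (n : ℕ) (i : Fin n) : E n := EuclideanSpace.single i 1

/-- The `i`-th component of `L^Φ_B (A', B')`, where `v = v_i` is the `i`-th column of `B`
and `ω = ω_i` the `i`-th column of `B'`. -/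
def LPhiC {n : ℕ} (A' : E n →ₗ[ℝ] E n) (v ω : E n) (ξ η : E n) : E n :=
  A' (Qv v ξ η) - Qv v (A' ξ) η - Qv v ξ (A' η) + Qv ω ξ η

/-- `(q_1,…,q_n)` lies in the kernel of `L^Ψ_B`, where `v i` are the columns of `B`. -/
def KerPsi {n : ℕ} (v : Fin n → E n) (q : Fin n → E n → E n → E n) : Prop :=
  ∀ i j : Fin n, i < j → ∀ ξ η θ : E n,
    brk (q i) (Qv (v j)) ξ η θ = brk (q j) (Qv (v i)) ξ η θ

/-- `(q_1,…,q_n)` lies in the subspace `W`; `i0` is the index of the first coordinate. -/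
def memW {n : ℕ} (i0 : Fin n) (q : Fin n → E n → E n → E n) : Prop :=
  (∀ j, q j (stdE n j) (stdE n j) = 0) ∧
  (∀ i j, ⟪stdE n i, q j (stdE n i) (stdE n i)⟫ + ⟪stdE n j, q i (stdE n j) (stdE n j)⟫ = 0) ∧
  (∀ j, ⟪stdE n i0, q i0 (stdE n j) (stdE n j)⟫ = 0)



section AuxStmt7
variable {n : ℕ}

private lemma inner_stdE (i j : Fin n) :
    ⟪stdE n i, stdE n j⟫ = if i = j then (1:ℝ) else 0 := by
  simp [stdE, EuclideanSpace.inner_single_left, EuclideanSpace.single_apply, eq_comm]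

private lemma Qv_diag_ne {p r : Fin n} (h : p ≠ r) :
    Qv (stdE n r) (stdE n p) (stdE n p) = stdE n r := by
  simp only [Qv, inner_stdE, eq_self_iff_true, if_true, if_neg h]
  module

private lemma Qv_diag_self (p : Fin n) :
    Qv (stdE n p) (stdE n p) (stdE n p) = -(stdE n p) := by
  simp only [Qv, inner_stdE, eq_self_iff_true, if_true]
  module

private lemma Qv_mix₁ {p r : Fin n} (h : p ≠ r) :
    Qv (stdE n r) (stdE n p) (stdE n r) = -(stdE n p) := by
  simp only [Qv, inner_stdE, eq_self_iff_true, if_true, if_neg h]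
  module

private lemma Qv_mix₂ {p r : Fin n} (h : p ≠ r) :
    Qv (stdE n r) (stdE n r) (stdE n p) = -(stdE n p) := by
  simp only [Qv, inner_stdE, eq_self_iff_true, if_true, if_neg h, if_neg h.symm]
  module

private lemma Qv_mix₃ {p r : Fin n} (h : p ≠ r) :
    Qv (stdE n p) (stdE n r) (stdE n p) = -(stdE n r) := by
  simp only [Qv, inner_stdE, eq_self_iff_true, if_true, if_neg h, if_neg h.symm]
  module

private lemma Qv_zero_right (v ξ : E n) : Qv v ξ 0 = 0 := by
  simp [Qv]

private lemma Qv_unit_left (p : Fin n) (t : E n) :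
    Qv (stdE n p) (stdE n p) t = -t := by
  unfold Qv
  rw [real_inner_comm t (stdE n p)]
  simp only [inner_stdE, eq_self_iff_true, if_true]
  module

private lemma Qv_term6 {p r : Fin n} (h : p ≠ r) (t : E n) :
    Qv (stdE n p) (stdE n r) t
      = ⟪stdE n r, t⟫ • stdE n p - ⟪t, stdE n p⟫ • stdE n r := by
  unfold Qv
  rw [inner_stdE, if_neg h.symm]
  module

end AuxStmt7

/-- Lemma `lemma:inj 2`: for `n ≥ 2` and `(q_1,…,q_n) ∈ Ker L^Ψ_I ∩ W`,
`⟨e_i, q_i(e_j,e_j)⟩ + ⟨e_j, q_j(e_i,e_i)⟩ = 0` for all `i, j`, and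
`⟨e_k, q_i(e_j,e_j)⟩ = 0` whenever `i ≠ k`. -/
theorem stmt7 {n : ℕ} (hn : 2 ≤ n)
    (q : Fin n → E n → E n → E n) (hq : ∀ i, IsSymmBilin (q i))
    (hker : KerPsi (stdE n) q) (hW : memW ⟨0, by omega⟩ q) :
    (∀ i j : Fin n,
        ⟪stdE n i, q i (stdE n j) (stdE n j)⟫ + ⟪stdE n j, q j (stdE n i) (stdE n i)⟫ = 0) ∧
    (∀ i j k : Fin n, i ≠ k → ⟪stdE n k, q i (stdE n j) (stdE n j)⟫ = 0) := by
  obtain ⟨hW1, hW2, -⟩ := hW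
  have hsym : ∀ i (ξ η : E n), q i ξ η = q i η ξ := fun i => (hq i).1
  have hlin : ∀ i ξ, IsLinearMap ℝ (q i ξ) := fun i => (hq i).2
  have hK : ∀ p r : Fin n, p ≠ r → ∀ ξ η θ : E n,
      brk (q p) (Qv (stdE n r)) ξ η θ = brk (q r) (Qv (stdE n p)) ξ η θ := by
    intro p r h ξ η θ
    rcases h.lt_or_gt with h' | h'
    · exact hker p r h' ξ η θ
    · exact (hker r p h' ξ η θ).symm
  -- Step 1 : q_p(e_p, e_r) = 0 for all p, r
  have h1 : ∀ p r : Fin n, q p (stdE n p) (stdE n r) = 0 := by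
    intro p r
    by_cases hpr : p = r
    · subst hpr; exact hW1 p
    · have E := hK p r hpr (stdE n p) (stdE n p) (stdE n p)
      simp only [brk] at E
      simp only [hW1 p, Qv_zero_right, Qv_diag_ne hpr, Qv_unit_left p,
        (hlin r (stdE n p)).map_neg, neg_zero, zero_add, add_zero, sub_zero,
        sub_self] at E
      have h3 : (3:ℝ) • q p (stdE n p) (stdE n r) = 0 := by
        rw [show (3:ℝ) • q p (stdE n p) (stdE n r)
            = q p (stdE n p) (stdE n r) + q p (stdE n p) (stdE n r)
                + q p (stdE n p) (stdE n r) by module]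
        exact E
      exact (smul_eq_zero.mp h3).resolve_left (by norm_num)
  -- Step 2 : main structural identity
  have hmain : ∀ p r : Fin n, p ≠ r →
      q p (stdE n r) (stdE n r)
        = ⟪stdE n p, q r (stdE n p) (stdE n p)⟫ • stdE n r
          - ⟪stdE n r, q r (stdE n p) (stdE n p)⟫ • stdE n p := by
    intro p r hpr
    have hrp : q r (stdE n p) (stdE n r) = 0 := by
      rw [hsym r (stdE n p) (stdE n r)]; exact h1 r p
    have hpp : q p (stdE n r) (stdE n p) = 0 := by
      rw [hsym p (stdE n r) (stdE n p)]; exact h1 p r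
    have E := hK p r hpr (stdE n p) (stdE n p) (stdE n r)
    simp only [brk] at E
    have z5 : q r (stdE n r) (stdE n p) = 0 := by
      rw [hsym r (stdE n r) (stdE n p)]; exact hrp
    simp only [h1 p r, hpp, h1 p p, hrp, z5,
      Qv_zero_right, Qv_mix₁ hpr, Qv_mix₂ hpr, Qv_diag_ne hpr, Qv_unit_left p,
      Qv_mix₃ hpr, Qv_term6 hpr, (hlin p (stdE n p)).map_neg,
      (hlin r (stdE n p)).map_neg, (hlin r (stdE n r)).map_neg,
      neg_zero, zero_add, add_zero, sub_zero, zero_sub, sub_self, neg_sub] at E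
    rw [E, real_inner_comm (q r (stdE n p) (stdE n p)) (stdE n p)]
  -- inner products of the structural identity
  have hcomp : ∀ p r : Fin n, p ≠ r → ∀ k : Fin n,
      ⟪stdE n k, q p (stdE n r) (stdE n r)⟫
        = (if k = r then ⟪stdE n p, q r (stdE n p) (stdE n p)⟫ else 0)
          - (if k = p then ⟪stdE n r, q r (stdE n p) (stdE n p)⟫ else 0) := by
    intro p r hpr k
    rw [hmain p r hpr, inner_sub_right, real_inner_smul_right, real_inner_smul_right,
      inner_stdE, inner_stdE]
    by_cases hk1 : k = r <;> by_cases hk2 : k = p <;> simp [hk1, hk2]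
  have key : ∀ p r : Fin n, p ≠ r → ⟪stdE n p, q r (stdE n p) (stdE n p)⟫ = 0 := by
    intro p r hpr
    have h2 : ⟪stdE n r, q p (stdE n r) (stdE n r)⟫
        = ⟪stdE n p, q r (stdE n p) (stdE n p)⟫ := by
      rw [hcomp p r hpr r]
      simp [Ne.symm hpr]
    have h3 := hW2 p r
    rw [h2] at h3
    linarith
  constructor
  · intro i j
    by_cases hij : i = j
    · subst hij; rw [hW1 i]; simp
    · rw [hcomp i j hij i]
      simp [hij]
  · intro i j k hik
    by_cases hij : i = j
    · subst hij; rw [hW1 i]; simp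
    · have hki : k ≠ i := Ne.symm hik
      rw [hcomp i j hij k]
      by_cases hkj : k = j
      · simpa [hkj, hki, Ne.symm hij] using key i j hij
      · simp [hkj, hki]

end
end

section
/- Let n ≥ 3 and let (q_1,…,q_n) be a tuple of symmetric bilinear maps ℝ^n × ℝ^n → ℝ^n lying in Ker L^Ψ_I ∩ W, where I is the identity matrix. Then for any mutually distinct i,j,k ∈ {1,…,n}, q_i(e_j,e_k) = q_j(e_k,e_i) = q_k(e_i,e_j). -/
open scoped RealInnerProductSpace

noncomputable section

lemma inner_stdE_s8 {n : ℕ} (i : Fin n) (w : E n) : ⟪stdE n i, w⟫ = w i := by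
  simp [stdE, EuclideanSpace.inner_single_left]

lemma inner_stdE' {n : ℕ} (i : Fin n) (w : E n) : ⟪w, stdE n i⟫ = w i := by
  rw [real_inner_comm]; exact inner_stdE_s8 i w

lemma stdE_apply {n : ℕ} (i j : Fin n) : stdE n i j = if j = i then 1 else 0 := by
  simp [stdE, EuclideanSpace.single_apply]

lemma Qv_jj {n : ℕ} (j : Fin n) (w : E n) : Qv (stdE n j) (stdE n j) w = -w := by
  simp only [Qv, inner_stdE_s8, inner_stdE', stdE_apply, if_pos rfl, eq_self_iff_true, if_true]
  module

lemma Qv_ji {n : ℕ} {i j : Fin n} (h : i ≠ j) (w : E n) :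
    Qv (stdE n j) (stdE n i) w = w i • stdE n j - w j • stdE n i := by
  simp only [Qv, inner_stdE_s8, inner_stdE', stdE_apply, if_neg h, if_neg h.symm]
  module

lemma Qv_jii {n : ℕ} {i j : Fin n} (h : i ≠ j) :
    Qv (stdE n j) (stdE n i) (stdE n i) = stdE n j := by
  rw [Qv_ji h]
  simp [stdE_apply, h.symm]

lemma Qv_jij {n : ℕ} {i j : Fin n} (h : i ≠ j) :
    Qv (stdE n j) (stdE n i) (stdE n j) = -(stdE n i) := by
  rw [Qv_ji h]
  simp [stdE_apply, h]

lemma Qv_jik {n : ℕ} {i j k : Fin n} (hij : i ≠ j) (hkj : k ≠ j) (hki : k ≠ i) :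
    Qv (stdE n j) (stdE n i) (stdE n k) = 0 := by
  rw [Qv_ji hij]
  simp [stdE_apply, hki.symm, hkj.symm]

lemma Qv_zero {n : ℕ} (v ξ : E n) : Qv v ξ 0 = 0 := by
  simp [Qv]

lemma Qv_smul {n : ℕ} (v ξ : E n) (c : ℝ) (w : E n) :
    Qv v ξ (c • w) = c • Qv v ξ w := by
  simp only [Qv, real_inner_smul_right, inner_smul_left, RCLike.conj_to_real,
    real_inner_smul_left]
  module
/-- Lemma `lemma:inj 3`: for `n ≥ 3` and `(q_1,…,q_n) ∈ Ker L^Ψ_I ∩ W`,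
`q_i(e_j,e_k) = q_j(e_k,e_i) = q_k(e_i,e_j)` for mutually distinct `i, j, k`. -/
theorem stmt8 {n : ℕ} (hn : 3 ≤ n)
    (q : Fin n → E n → E n → E n) (hq : ∀ i, IsSymmBilin (q i))
    (hker : KerPsi (stdE n) q) (hW : memW ⟨0, by omega⟩ q) :
    ∀ i j k : Fin n, i ≠ j → j ≠ k → i ≠ k →
      q i (stdE n j) (stdE n k) = q j (stdE n k) (stdE n i) ∧
      q j (stdE n k) (stdE n i) = q k (stdE n i) (stdE n j) := by
  obtain ⟨hW1, hW2, _⟩ := hW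
  have hsy : ∀ i (ξ η : E n), q i ξ η = q i η ξ := fun i => (hq i).1
  have hlin : ∀ i (ξ : E n), IsLinearMap ℝ (q i ξ) := fun i => (hq i).2
  have hker' : ∀ i j : Fin n, i ≠ j → ∀ ξ η θ : E n,
      brk (q i) (Qv (stdE n j)) ξ η θ = brk (q j) (Qv (stdE n i)) ξ η θ := by
    intro i j hij ξ η θ
    rcases hij.lt_or_gt with h | h
    · exact hker i j h ξ η θ
    · exact (hker j i h ξ η θ).symm
  -- Step 1 : q_j(e_j, e_i) = 0 for all i, j
  have P0 : ∀ i j : Fin n, q j (stdE n j) (stdE n i) = 0 := by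
    intro i j
    by_cases h : i = j
    · subst h; exact hW1 i
    · have H := hker' i j h (stdE n j) (stdE n j) (stdE n j)
      simp only [brk, Qv_jj, Qv_jii (Ne.symm h), (hlin i _).map_neg, hW1 j, Qv_zero] at H
      linear_combination (norm := module) (-3⁻¹ : ℝ) • H
  have hneg : ∀ a (ξ w : E n), q a ξ (-w) = -(q a ξ w) := fun a ξ w => (hlin a ξ).map_neg w
  have hsub : ∀ a (ξ w w' : E n), q a ξ (w - w') = q a ξ w - q a ξ w' :=
    fun a ξ w w' => (hlin a ξ).map_sub w w'
  have hsmul : ∀ a (ξ : E n) (c : ℝ) (w : E n), q a ξ (c • w) = c • q a ξ w :=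
    fun a ξ c w => (hlin a ξ).map_smul c w
  have P0' : ∀ i j : Fin n, q j (stdE n i) (stdE n j) = 0 := fun i j =>
    (hsy j _ _).trans (P0 i j)
  -- Step 2
  have hS : ∀ i j : Fin n, i ≠ j → q j (stdE n i) (stdE n i) =
      (q i (stdE n j) (stdE n j)) j • stdE n i - (q i (stdE n j) (stdE n j)) i • stdE n j := by
    intro i j h
    have H := hker' i j h (stdE n j) (stdE n j) (stdE n i)
    simp only [brk, Qv_jj, Qv_ji h, Qv_ji (Ne.symm h), hneg, hsub, hsmul, P0, P0', hW1,
      Qv_zero, neg_zero, stdE_apply] at H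
    simp only [if_neg h, if_neg (Ne.symm h), if_pos rfl, eq_self_iff_true, if_true,
      zero_smul, one_smul, smul_zero, sub_zero, zero_sub, hneg, P0, P0', hW1,
      neg_zero, add_zero, zero_add, PiLp.zero_apply] at H
    linear_combination (norm := module) (-1 : ℝ) • H
  -- Step 3
  have hdiag0 : ∀ i j : Fin n, i ≠ j → (q i (stdE n j) (stdE n j)) j = 0 := by
    intro i j h
    have h1 := hS i j h
    have h2 := congrArg (fun v : E n => v i) h1
    simp only [PiLp.sub_apply, PiLp.smul_apply, smul_eq_mul, stdE_apply, if_pos rfl,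
      eq_self_iff_true, if_true, if_neg h, if_neg (Ne.symm h), mul_one, mul_zero,
      sub_zero] at h2
    have h3 := hW2 i j
    rw [inner_stdE_s8, inner_stdE_s8, h2] at h3
    linarith
  -- Step 4
  have hM : ∀ i k : Fin n, i ≠ k → ∃ c : ℝ, q i (stdE n k) (stdE n k) = c • stdE n i := by
    intro i k h
    refine ⟨-((q k (stdE n i) (stdE n i)) k), ?_⟩
    rw [hS k i (Ne.symm h), hdiag0 k i (Ne.symm h)]
    module
  -- Step 5
  have main : ∀ i j k : Fin n, i ≠ j → j ≠ k → i ≠ k →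
      q i (stdE n k) (stdE n j) = q j (stdE n k) (stdE n i) := by
    intro i j k hij hjk hik
    obtain ⟨c, hc⟩ := hM i k hik
    obtain ⟨d, hd⟩ := hM j k hjk
    have H := hker' i j hij (stdE n k) (stdE n k) (stdE n k)
    simp only [brk, hc, hd, Qv_smul, Qv_jii (Ne.symm hjk), Qv_jii (Ne.symm hik),
      Qv_jik (Ne.symm hjk) hij hik, Qv_jik (Ne.symm hik) (Ne.symm hij) hjk,
      smul_zero] at H
    linear_combination (norm := module) ((3:ℝ)⁻¹ : ℝ) • H
  intro i j k hij hjk hik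
  constructor
  · rw [hsy i]
    exact main i j k hij hjk hik
  · rw [hsy j]
    exact main j k i hjk (Ne.symm hik) (Ne.symm hij)
end
end

section
/- Let n ≥ 4 and let (q_1,…,q_n) be a tuple of symmetric bilinear maps ℝ^n × ℝ^n → ℝ^n lying in Ker L^Ψ_I ∩ W, where I is the identity matrix. Then q_i(e_j,e_k) = 0 for all i,j,k = 1,…,n; consequently q_1 = ⋯ = q_n = 0, i.e. Ker L^Ψ_I ∩ W = {0}. -/
open scoped RealInnerProductSpace

noncomputable section

/-!
On basis vectors the kernel equations `[q_i, Q_{e_j}] = [q_j, Q_{e_i}]` (`i ≠ j`) are linear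
relations among the coefficients `⟨e_m, q_i(e_a, e_b)⟩`. The triple `(e_i, e_i, e_i)` kills
`q_i(e_i, e_j)`; then `(e_i, e_i, e_j)` kills `q_i(e_j, e_j)` except for its `e_i`-component, using
`W` for the `e_j`-component. The triple `(e_i, e_i, e_c)` gives `q_i(e_c, e_j) = -q_j(e_i, e_c)` for
distinct `i, j, c`, and going around the three cyclic permutations of `(i, a, b)` forces
`q_i(e_a, e_b) = 0`. Finally `f i j = ⟨e_i, q_i(e_j, e_j)⟩` is antisymmetric (again from
`(e_i, e_i, e_j)`) and satisfies `f i j - f i k + f j k = 0` (from `(e_j, e_k, e_k)`), so it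
vanishes once `W` gives `f i0 j = 0` at the first index `i0`.
-/

def kron {n : ℕ} (a b : Fin n) : ℝ := if a = b then 1 else 0

def coeff {n : ℕ} (q : E n → E n → E n) (a b m : Fin n) : ℝ := q (stdE n a) (stdE n b) m

/-- `⟨e_m, q(e_a, Q_{e_j}(e_b, e_c))⟩`, where `y = coeff q`. -/
def qQCoeff {n : ℕ} (y : Fin n → Fin n → Fin n → ℝ) (j a b c m : Fin n) : ℝ :=
  kron b c * y a j m - kron b j * y a c m - kron c j * y a b m

/-- `⟨e_m, Q_{e_j}(e_a, q(e_b, e_c))⟩`, where `y = coeff q`. -/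
def QqCoeff {n : ℕ} (y : Fin n → Fin n → Fin n → ℝ) (j a b c m : Fin n) : ℝ :=
  y b c a * kron m j - kron a j * y b c m - y b c j * kron m a

/-- `⟨e_m, [q, Q_{e_j}](e_a, e_b, e_c)⟩`, where `y = coeff q`. -/
def brkCoeff {n : ℕ} (y : Fin n → Fin n → Fin n → ℝ) (j a b c m : Fin n) : ℝ :=
  qQCoeff y j a b c m + qQCoeff y j b c a m + qQCoeff y j c a b m
    - (QqCoeff y j a b c m + QqCoeff y j b c a m + QqCoeff y j c a b m)

section Components

variable {n : ℕ}

lemma kron_self (a : Fin n) : kron a a = 1 := if_pos rfl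

lemma kron_of_ne {a b : Fin n} (h : a ≠ b) : kron a b = 0 := if_neg h

lemma stdE_apply_s10 (a m : Fin n) : stdE n a m = kron m a := by
  simp [stdE, kron]

lemma inner_stdE_left (a : Fin n) (w : E n) : ⟪stdE n a, w⟫ = w a := by
  simp [stdE, EuclideanSpace.inner_single_left]

lemma inner_stdE_right (a : Fin n) (w : E n) : ⟪w, stdE n a⟫ = w a := by
  rw [real_inner_comm, inner_stdE_left]

lemma inner_stdE_stdE (a b : Fin n) : ⟪stdE n a, stdE n b⟫ = kron a b := by
  rw [inner_stdE_left, stdE_apply_s10]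

lemma Qv_stdE_stdE (j b c : Fin n) :
    Qv (stdE n j) (stdE n b) (stdE n c)
      = kron b c • stdE n j - kron b j • stdE n c - kron c j • stdE n b := by
  simp only [Qv, inner_stdE_stdE]

lemma Qv_stdE_apply (j a : Fin n) (w : E n) (m : Fin n) :
    Qv (stdE n j) (stdE n a) w m = w a * kron m j - kron a j * w m - w j * kron m a := by
  rw [Qv, inner_stdE_stdE, inner_stdE_left, inner_stdE_right]
  simp only [PiLp.sub_apply, PiLp.smul_apply, smul_eq_mul, stdE_apply_s10]

lemma apply_Qv_stdE_apply {q : E n → E n → E n} (hq : ∀ ξ, IsLinearMap ℝ (q ξ))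
    (j a b c m : Fin n) :
    q (stdE n a) (Qv (stdE n j) (stdE n b) (stdE n c)) m = qQCoeff (coeff q) j a b c m := by
  have hl := hq (stdE n a)
  rw [Qv_stdE_stdE, hl.map_sub, hl.map_sub, hl.map_smul, hl.map_smul, hl.map_smul]
  simp only [PiLp.sub_apply, PiLp.smul_apply, smul_eq_mul, qQCoeff, coeff]

lemma brk_stdE_apply {q : E n → E n → E n} (hq : ∀ ξ, IsLinearMap ℝ (q ξ))
    (j a b c m : Fin n) :
    brk q (Qv (stdE n j)) (stdE n a) (stdE n b) (stdE n c) m = brkCoeff (coeff q) j a b c m := by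
  simp only [brk, PiLp.add_apply, PiLp.sub_apply, apply_Qv_stdE_apply hq, Qv_stdE_apply,
    brkCoeff, QqCoeff, coeff]

lemma eq_zero_of_forall_stdE {f : E n → E n} (hf : IsLinearMap ℝ f)
    (h : ∀ k, f (stdE n k) = 0) (ξ : E n) : f ξ = 0 := by
  have hb : hf.mk' f = 0 := (EuclideanSpace.basisFun (Fin n) ℝ).toBasis.ext fun k => by
    simpa [stdE] using h k
  exact LinearMap.congr_fun hb ξ

lemma IsSymmBilin.eq_zero_of_forall_stdE {q : E n → E n → E n} (hq : IsSymmBilin q)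
    (h : ∀ j k, q (stdE n j) (stdE n k) = 0) (ξ η : E n) : q ξ η = 0 := by
  refine _root_.eq_zero_of_forall_stdE (hq.2 ξ) (fun k => ?_) η
  rw [hq.1]
  exact _root_.eq_zero_of_forall_stdE (hq.2 _) (h k) ξ

end Components

/-- `Ker L^Ψ_I ∩ W` read on the coefficients `x i a b m = ⟨e_m, q_i(e_a, e_b)⟩`. -/
structure InKerW {n : ℕ} (x : Fin n → Fin n → Fin n → Fin n → ℝ) (i0 : Fin n) : Prop where
  symm : ∀ i a b m, x i a b m = x i b a m
  self_diag : ∀ i m, x i i i m = 0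
  skew : ∀ i j, x j i i i + x i j j j = 0
  first : ∀ j, x i0 j j i0 = 0
  ker : ∀ i j, i ≠ j → ∀ a b c m, brkCoeff (x i) j a b c m = brkCoeff (x j) i a b c m

namespace InKerW

variable {n : ℕ} {x : Fin n → Fin n → Fin n → Fin n → ℝ} {i0 : Fin n}

lemma apply_self_left (hx : InKerW x i0) {i j : Fin n} (hij : i ≠ j) (m : Fin n) :
    x i i j m = 0 := by
  have h := hx.ker i j hij i i i m
  simp only [brkCoeff, qQCoeff, QqCoeff, kron_self, kron_of_ne hij, hx.self_diag] at h
  linarith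

lemma apply_self_right (hx : InKerW x i0) {i j : Fin n} (hij : i ≠ j) (m : Fin n) :
    x i j i m = 0 := by
  rw [hx.symm]
  exact hx.apply_self_left hij m

lemma diag_apply_of_ne (hx : InKerW x i0) {i j m : Fin n} (hij : i ≠ j) (hmi : m ≠ i)
    (hmj : m ≠ j) : x i j j m = 0 := by
  have h := hx.ker i j hij i i j m
  simp only [brkCoeff, qQCoeff, QqCoeff, kron_self, kron_of_ne hij, kron_of_ne hij.symm,
    kron_of_ne hmi, kron_of_ne hmj, hx.self_diag, hx.apply_self_left hij, hx.apply_self_right hij,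
    hx.apply_self_left hij.symm, hx.apply_self_right hij.symm] at h
  linarith

lemma diag_apply_self_add (hx : InKerW x i0) {i j : Fin n} (hij : i ≠ j) :
    x i j j i + x j i i j = 0 := by
  have h := hx.ker i j hij i i j i
  simp only [brkCoeff, qQCoeff, QqCoeff, kron_self, kron_of_ne hij, kron_of_ne hij.symm,
    hx.self_diag, hx.apply_self_left hij, hx.apply_self_right hij, hx.apply_self_left hij.symm,
    hx.apply_self_right hij.symm] at h
  linarith

lemma diag_apply_diag (hx : InKerW x i0) {i j : Fin n} (hij : i ≠ j) : x i j j j = 0 := by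
  have h := hx.ker i j hij i i j j
  simp only [brkCoeff, qQCoeff, QqCoeff, kron_self, kron_of_ne hij, kron_of_ne hij.symm,
    hx.self_diag, hx.apply_self_left hij, hx.apply_self_right hij, hx.apply_self_left hij.symm,
    hx.apply_self_right hij.symm] at h
  linarith [hx.skew j i]

lemma cross_add_cross (hx : InKerW x i0) {i j c : Fin n} (hij : i ≠ j) (hci : c ≠ i)
    (hcj : c ≠ j) (m : Fin n) : x i c j m + x j i c m = 0 := by
  have h := hx.ker i j hij i i c m
  simp only [brkCoeff, qQCoeff, QqCoeff, kron_self, kron_of_ne hij, kron_of_ne hci,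
    kron_of_ne hcj, kron_of_ne hci.symm, hx.self_diag, hx.apply_self_left hci.symm,
    hx.apply_self_right hci.symm, hx.diag_apply_of_ne hij.symm hcj hci,
    hx.diag_apply_diag hij.symm] at h
  linarith [hx.symm j c i m, hx.symm j i c m]

lemma apply_of_pairwise_ne (hx : InKerW x i0) {i a b : Fin n} (hia : i ≠ a) (hib : i ≠ b)
    (hab : a ≠ b) (m : Fin n) : x i a b m = 0 := by
  linarith [hx.cross_add_cross hib hia.symm hab m, hx.cross_add_cross hab.symm hib hia m,
    hx.cross_add_cross hia.symm hab.symm hib.symm m]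

lemma diag_apply_self_cocycle (hx : InKerW x i0) {i j k : Fin n} (hij : i ≠ j) (hik : i ≠ k)
    (hjk : j ≠ k) : x i j j i - x i k k i + x j k k j = 0 := by
  have h := hx.ker i j hij j k k i
  simp only [brkCoeff, qQCoeff, QqCoeff, kron_self, kron_of_ne hij, kron_of_ne hij.symm,
    kron_of_ne hik, kron_of_ne hik.symm, kron_of_ne hjk, kron_of_ne hjk.symm,
    hx.apply_self_left hij.symm, hx.apply_self_left hjk, hx.apply_self_right hjk] at h
  linarith

lemma diag_apply_self (hx : InKerW x i0) {i j : Fin n} (hij : i ≠ j) : x i j j i = 0 := by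
  have self_first : ∀ {k}, k ≠ i0 → x k i0 i0 k = 0 := fun {k} hk => by
    linarith [hx.diag_apply_self_add hk, hx.first k]
  rcases eq_or_ne i i0 with rfl | hi
  · exact hx.first j
  rcases eq_or_ne j i0 with rfl | hj
  · exact self_first hi
  linarith [hx.diag_apply_self_cocycle hij hi hj, self_first hi, self_first hj]

lemma eq_zero (hx : InKerW x i0) (i a b m : Fin n) : x i a b m = 0 := by
  rcases eq_or_ne i a with rfl | hia
  · rcases eq_or_ne i b with rfl | hib
    · exact hx.self_diag i m
    · exact hx.apply_self_left hib m
  rcases eq_or_ne i b with rfl | hib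
  · exact hx.apply_self_right hia m
  rcases eq_or_ne a b with rfl | hab
  · rcases eq_or_ne m i with rfl | hmi
    · exact hx.diag_apply_self hia
    rcases eq_or_ne m a with rfl | hma
    · exact hx.diag_apply_diag hia
    exact hx.diag_apply_of_ne hia hmi hma
  exact hx.apply_of_pairwise_ne hia hib hab m

end InKerW

lemma inKerW_coeff {n : ℕ} {q : Fin n → E n → E n → E n} {i0 : Fin n}
    (hq : ∀ i, IsSymmBilin (q i)) (hker : KerPsi (stdE n) q) (hW : memW i0 q) :
    InKerW (fun i => coeff (q i)) i0 where
  symm i a b m := by simp only [coeff, (hq i).1 (stdE n a)]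
  self_diag i m := by simp [coeff, hW.1 i]
  skew i j := by simpa only [coeff, inner_stdE_left] using hW.2.1 i j
  first j := by simpa only [coeff, inner_stdE_left] using hW.2.2 j
  ker i j hij a b c m := by
    simp only [← brk_stdE_apply (hq _).2]
    rcases hij.lt_or_gt with h | h
    · rw [hker i j h]
    · rw [hker j i h]

/-- Lemma `lemma:inj 5`: for `n ≥ 4` and `(q_1,…,q_n) ∈ Ker L^Ψ_I ∩ W`,
`q_i(e_j,e_k) = 0` for all `i, j, k`; consequently `q_1 = ⋯ = q_n = 0`,
i.e. `Ker L^Ψ_I ∩ W = {0}`. -/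
theorem stmt10 {n : ℕ} (hn : 4 ≤ n)
    (q : Fin n → E n → E n → E n) (hq : ∀ i, IsSymmBilin (q i))
    (hker : KerPsi (stdE n) q) (hW : memW ⟨0, by omega⟩ q) :
    (∀ i j k : Fin n, q i (stdE n j) (stdE n k) = 0) ∧
    (∀ i, ∀ ξ η : E n, q i ξ η = 0) := by
  have hbasis : ∀ i j k : Fin n, q i (stdE n j) (stdE n k) = 0 := fun i j k => by
    ext m
    exact (inKerW_coeff hq hker hW).eq_zero i j k m
  exact ⟨hbasis, fun i => (hq i).eq_zero_of_forall_stdE (hbasis i)⟩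

end
end
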